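/- Let G'=(V',E') be a finite simple graph in which every vertex has degree at least 1 and at most d, let q ≥ 2 and 2 ≤ r ≤ q be integers, and let ε > 0, α > 0, β > 0 satisfy α > 7ε and β ≤ 1/q^{10}. Let S ⊆ V' satisfy μ_{G'}(S) = μ_{G'}/q and e_{G'}(S, V'∖S) ≤ (ε/2)·μ_{G'}(S). Let C_1, …, C_r be a partition of V' such that for every i: every vertex of the induced subgraph G'[C_i] has degree at least 1 in G'[C_i], the conductance of the induced subgraph satisfies φ_{G'[C_i]} ≥ α, φ_{G'}(C_i) ≤ β, and μ_{G'}(C_i) ≥ μ_{G'}/(q+1). Then there exists an index i ∈ {1,…,r} such that μ_{G'}(C_i △ S) ≤ (4ε/α + q²β)·d·μ_{G'}(S), where △ denotes symmetric difference. -/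

import Mathlib

/-!
Inside a cluster `C i`, conductance at least `α` of `G[C i]` applied to the smaller of
`C i ∩ S` and `C i \ S` shows that this smaller piece has volume at most `e_i / α`, where
`e_i = e(C i ∩ S, C i \ S) + α · e(C i, (C i)ᶜ)`. Summed over the clusters, the errors `e_i` are
at most `e(S, Sᶜ) + α β μ ≤ (ε/2 + α q β) μ(S)`, a small fraction of `α μ(S)`. As the pieces
`C i ∩ S` exhaust `S`, some cluster must have `C i \ S` as its small piece; as every cluster has
volume at least `2 μ(S) / 3`, no second cluster can. Then `C i △ S` is `C i \ S` together with
the small pieces `C j ∩ S`, `j ≠ i`, of total volume at most `∑ e_j / α`.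
-/

open scoped Classical
open Matrix

noncomputable section

namespace Sublinear

variable {V : Type*}

/-- The degree `d(v)` of a vertex, as a real number. -/
def deg [Fintype V] (G : SimpleGraph V) (v : V) : ℝ :=
  ((Finset.univ.filter fun u => G.Adj v u).card : ℝ)

/-- The volume `μ_G(S)` of a set of vertices. -/
def vol [Fintype V] (G : SimpleGraph V) (S : Set V) : ℝ :=
  ∑ v ∈ Finset.univ.filter (fun v => v ∈ S), deg G v

/-- The number of ordered adjacent pairs `(u,v)` with `u ∈ S`, `v ∈ T`.
For disjoint `S`, `T` this equals the number `e_G(S,T)` of edges between `S` and `T`. -/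
def eB [Fintype V] (G : SimpleGraph V) (S T : Set V) : ℝ :=
  (((Finset.univ : Finset (V × V)).filter
      fun p => p.1 ∈ S ∧ p.2 ∈ T ∧ G.Adj p.1 p.2).card : ℝ)

/-- The number `e_G(S)` of edges with both endpoints in `S`. -/
def eIn [Fintype V] (G : SimpleGraph V) (S : Set V) : ℝ := eB G S S / 2

/-- The conductance `φ_G(S)` of a set of vertices. -/
def cond [Fintype V] (G : SimpleGraph V) (S : Set V) : ℝ :=
  eB G S Sᶜ / vol G S

/-- The conductance `φ_G` of the graph: the minimum of `φ_G(S)` over nonempty `S`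
with `μ_G(S) ≤ μ_G/2`. -/
def conductance [Fintype V] (G : SimpleGraph V) : ℝ :=
  sInf {x | ∃ S : Set V, S.Nonempty ∧ vol G S ≤ vol G Set.univ / 2 ∧ x = cond G S}


section Lemmas

open Function

variable [Fintype V] (G : SimpleGraph V)

lemma eB_eq_sum (S T : Set V) :
    eB G S T = ∑ v ∈ Finset.univ.filter (· ∈ S), ∑ u ∈ Finset.univ.filter (· ∈ T),
      if G.Adj v u then (1 : ℝ) else 0 := by
  rw [eB, ← Finset.sum_product', Finset.sum_ite, Finset.sum_const_zero, add_zero,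
    Finset.sum_const, nsmul_one]
  congr 2
  ext p
  simp [and_assoc]

lemma eB_nonneg (S T : Set V) : 0 ≤ eB G S T := Nat.cast_nonneg _

lemma vol_eq_eB_univ (S : Set V) : vol G S = eB G S Set.univ := by
  simp [vol, eB_eq_sum, deg]

lemma eB_symm (S T : Set V) : eB G S T = eB G T S := by
  rw [eB_eq_sum, eB_eq_sum, Finset.sum_comm]
  simp only [G.adj_comm]

lemma eB_mono {S S' T T' : Set V} (hS : S ⊆ S') (hT : T ⊆ T') :
    eB G S T ≤ eB G S' T' := by
  unfold eB
  gcongr with p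

lemma eB_union_left {S₁ S₂ : Set V} (h : Disjoint S₁ S₂) (T : Set V) :
    eB G (S₁ ∪ S₂) T = eB G S₁ T + eB G S₂ T := by
  simp only [eB_eq_sum, Set.mem_union, Finset.filter_or]
  exact Finset.sum_union (Finset.disjoint_filter.mpr fun _ _ hv => Set.disjoint_left.mp h hv)

lemma eB_union_right (S : Set V) {T₁ T₂ : Set V} (h : Disjoint T₁ T₂) :
    eB G S (T₁ ∪ T₂) = eB G S T₁ + eB G S T₂ := by
  rw [eB_symm, eB_union_left G h, eB_symm G T₁, eB_symm G T₂]

lemma eB_iUnion_left {ι : Type*} [Fintype ι] (A : ι → Set V) (hA : Pairwise (Disjoint on A))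
    (T : Set V) : eB G (⋃ i, A i) T = ∑ i, eB G (A i) T := by
  simp only [eB_eq_sum]
  rw [← Finset.sum_biUnion]
  · congr 1; ext v; simp
  · intro i _ j _ hij
    exact Finset.disjoint_filter.mpr fun _ _ hv => Set.disjoint_left.mp (hA hij) hv

lemma vol_nonneg (S : Set V) : 0 ≤ vol G S := by
  rw [vol_eq_eB_univ]; exact eB_nonneg G _ _

lemma vol_union {S T : Set V} (h : Disjoint S T) : vol G (S ∪ T) = vol G S + vol G T := by
  simp only [vol_eq_eB_univ, eB_union_left G h]

lemma deg_le_vol {S : Set V} {v : V} (hv : v ∈ S) : deg G v ≤ vol G S :=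
  Finset.single_le_sum (f := deg G) (fun u _ => Nat.cast_nonneg _) (by simpa using hv)

lemma vol_inter_add_vol_sdiff (A S : Set V) : vol G (A ∩ S) + vol G (A \ S) = vol G A := by
  rw [← vol_union G Set.disjoint_sdiff_inter.symm, Set.inter_union_sdiff]

lemma vol_symmDiff (A S : Set V) :
    vol G (symmDiff A S) = vol G (A \ S) + (vol G S - vol G (A ∩ S)) := by
  rw [Set.symmDiff_def, vol_union G disjoint_sdiff_sdiff, ← vol_inter_add_vol_sdiff G S A,
    Set.inter_comm]
  ring

lemma vol_eq_eB_add_eB_compl (A X : Set V) : vol G X = eB G X A + eB G X Aᶜ := by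
  rw [vol_eq_eB_univ, ← eB_union_right G X disjoint_compl_right, Set.union_compl_self]

lemma vol_le_eB_add_eB_compl_of_subset {A X : Set V} (hX : X ⊆ A) :
    vol G X ≤ eB G X A + eB G A Aᶜ := by
  rw [vol_eq_eB_add_eB_compl G A X]
  gcongr
  exact eB_mono G hX le_rfl

lemma eB_induce {A X Y : Set V} (hX : X ⊆ A) (hY : Y ⊆ A) :
    eB (G.induce A) (Subtype.val ⁻¹' X) (Subtype.val ⁻¹' Y) = eB G X Y := by
  unfold eB
  congr 1
  refine Finset.card_bij (fun p _ => ((p.1 : V), (p.2 : V))) ?_ ?_ ?_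
  · intro p hp; simpa using hp
  · intro p _ p' _ h
    simp only [Prod.mk.injEq] at h
    exact Prod.ext (Subtype.ext h.1) (Subtype.ext h.2)
  · rintro ⟨u, v⟩ h
    simp only [Finset.mem_filter, Finset.mem_univ, true_and] at h
    exact ⟨(⟨u, hX h.1⟩, ⟨v, hY h.2.1⟩), by simpa using h, rfl⟩

lemma vol_induce {A X : Set V} (hX : X ⊆ A) :
    vol (G.induce A) (Subtype.val ⁻¹' X) = eB G X A := by
  rw [vol_eq_eB_univ, ← Subtype.coe_preimage_self, eB_induce G hX le_rfl]

lemma eB_compl_le_of_cond_le {A : Set V} {β : ℝ} (h : cond G A ≤ β) :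
    eB G A Aᶜ ≤ β * vol G A := by
  rcases (vol_nonneg G A).eq_or_lt with h0 | hpos
  · have : eB G A Aᶜ ≤ vol G A := by
      rw [vol_eq_eB_univ]; exact eB_mono G le_rfl (Set.subset_univ _)
    rw [← h0] at this ⊢
    linarith [eB_nonneg G A Aᶜ]
  · rwa [cond, div_le_iff₀ hpos] at h

lemma mul_vol_le_eB_compl_of_le_conductance {α : ℝ} (hα : α ≤ conductance G) {X : Set V}
    (hX : vol G X ≤ vol G Set.univ / 2) : α * vol G X ≤ eB G X Xᶜ := by
  rcases (vol_nonneg G X).eq_or_lt with h0 | hpos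
  · rw [← h0, mul_zero]; exact eB_nonneg G _ _
  have hne : X.Nonempty := Set.nonempty_iff_ne_empty.mpr (by rintro rfl; simp [vol] at hpos)
  have hle : conductance G ≤ cond G X :=
    csInf_le ⟨0, by rintro _ ⟨T, -, -, rfl⟩; exact div_nonneg (eB_nonneg G _ _) (vol_nonneg G T)⟩
      ⟨X, hne, hX, rfl⟩
  rw [← le_div_iff₀ hpos]
  exact hα.trans hle

lemma sum_eB_inter_left {ι : Type*} [Fintype ι] {C : ι → Set V} (hdisj : Pairwise (Disjoint on C))
    (hcover : ⋃ i, C i = Set.univ) (X T : Set V) : ∑ i, eB G (C i ∩ X) T = eB G X T := by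
  rw [← eB_iUnion_left G _ fun i j h => (hdisj h).mono Set.inter_subset_left Set.inter_subset_left,
    ← Set.iUnion_inter, hcover, Set.univ_inter]

lemma sum_vol_inter {ι : Type*} [Fintype ι] {C : ι → Set V} (hdisj : Pairwise (Disjoint on C))
    (hcover : ⋃ i, C i = Set.univ) (X : Set V) : ∑ i, vol G (C i ∩ X) = vol G X := by
  simp only [vol_eq_eB_univ]
  exact sum_eB_inter_left G hdisj hcover X _

lemma sum_vol {ι : Type*} [Fintype ι] {C : ι → Set V} (hdisj : Pairwise (Disjoint on C))
    (hcover : ⋃ i, C i = Set.univ) : ∑ i, vol G (C i) = vol G Set.univ := by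
  simpa using sum_vol_inter G hdisj hcover Set.univ

lemma sum_eB_inter_sdiff_le {ι : Type*} [Fintype ι] {C : ι → Set V}
    (hdisj : Pairwise (Disjoint on C)) (hcover : ⋃ i, C i = Set.univ) (S : Set V) :
    ∑ i, eB G (C i ∩ S) (C i \ S) ≤ eB G S Sᶜ := by
  rw [← sum_eB_inter_left G hdisj hcover S Sᶜ]
  exact Finset.sum_le_sum fun i _ => eB_mono G le_rfl fun v hv => hv.2

lemma sum_eB_compl_le_of_cond_le {ι : Type*} [Fintype ι] {C : ι → Set V}
    (hdisj : Pairwise (Disjoint on C)) (hcover : ⋃ i, C i = Set.univ) {β : ℝ}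
    (hout : ∀ i, cond G (C i) ≤ β) : ∑ i, eB G (C i) (C i)ᶜ ≤ β * vol G Set.univ := by
  rw [← sum_vol G hdisj hcover, Finset.mul_sum]
  exact Finset.sum_le_sum fun i _ => eB_compl_le_of_cond_le G (hout i)

lemma mul_eB_le_eB_sdiff_of_le_conductance_induce {α : ℝ} {A X : Set V}
    (hα : α ≤ conductance (G.induce A)) (hXA : X ⊆ A) (hX : 2 * eB G X A ≤ eB G A A) :
    α * eB G X A ≤ eB G X (A \ X) := by
  have hcompl : (Subtype.val ⁻¹' X : Set A)ᶜ = Subtype.val ⁻¹' (A \ X) := by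
    ext v; simp
  have hhalf : vol (G.induce A) (Subtype.val ⁻¹' X) ≤ vol (G.induce A) Set.univ / 2 := by
    rw [vol_induce G hXA, ← Subtype.coe_preimage_self, vol_induce G le_rfl]
    linarith
  have := mul_vol_le_eB_compl_of_le_conductance (G.induce A) hα hhalf
  rwa [hcompl, vol_induce G hXA, eB_induce G hXA Set.sdiff_subset] at this

lemma mul_vol_le_of_le_conductance_induce {α : ℝ} (hα0 : 0 ≤ α) {A X : Set V}
    (hα : α ≤ conductance (G.induce A)) (hXA : X ⊆ A) (hX : 2 * eB G X A ≤ eB G A A) :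
    α * vol G X ≤ eB G X (A \ X) + α * eB G A Aᶜ := by
  have hcut := mul_eB_le_eB_sdiff_of_le_conductance_induce G hα hXA hX
  calc α * vol G X ≤ α * (eB G X A + eB G A Aᶜ) :=
        mul_le_mul_of_nonneg_left (vol_le_eB_add_eB_compl_of_subset G hXA) hα0
    _ ≤ eB G X (A \ X) + α * eB G A Aᶜ := by linarith

lemma mul_vol_inter_le_or_mul_vol_sdiff_le {α : ℝ} (hα0 : 0 ≤ α) {A : Set V}
    (hα : α ≤ conductance (G.induce A)) (S : Set V) :
    α * vol G (A ∩ S) ≤ eB G (A ∩ S) (A \ S) + α * eB G A Aᶜ ∨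
      α * vol G (A \ S) ≤ eB G (A ∩ S) (A \ S) + α * eB G A Aᶜ := by
  have hsplit : eB G (A ∩ S) A + eB G (A \ S) A = eB G A A := by
    rw [← eB_union_left G Set.disjoint_sdiff_inter.symm, Set.inter_union_sdiff]
  rcases le_total (2 * eB G (A ∩ S) A) (eB G A A) with h | h
  · left
    simpa only [Set.sdiff_self_inter] using
      mul_vol_le_of_le_conductance_induce G hα0 hα Set.inter_subset_left h
  · right
    have := mul_vol_le_of_le_conductance_induce G hα0 hα Set.sdiff_subset (X := A \ S) (by linarith)
    rwa [Set.sdiff_sdiff_right_self, eB_symm] at this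

lemma exists_mul_add_sub_le_sum {ι : Type*} [Fintype ι] {α M : ℝ} (s t e : ι → ℝ)
    (hs : ∀ i, 0 ≤ s i) (he : ∀ i, 0 ≤ e i) (hα : 0 ≤ α) (hsum : ∑ i, s i = M)
    (hbig : ∀ i, 2 * M ≤ 3 * (s i + t i)) (hsmall : 3 * ∑ i, e i < α * M)
    (hdich : ∀ i, α * t i ≤ e i ∨ α * s i ≤ e i) :
    ∃ i, α * (t i + (M - s i)) ≤ ∑ j, e j := by
  have he_sum : 0 ≤ ∑ i, e i := Finset.sum_nonneg fun i _ => he i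
  have hothers : ∀ i j, i ≠ j → α * t i ≤ e i → α * s j ≤ e j := by
    intro i j hij hi
    refine (hdich j).resolve_left fun hj => ?_
    have hs2 : s i + s j ≤ M :=
      hsum ▸ Finset.add_le_sum (fun k _ => hs k) (Finset.mem_univ i) (Finset.mem_univ j) hij
    have he2 : e i + e j ≤ ∑ k, e k :=
      Finset.add_le_sum (fun k _ => he k) (Finset.mem_univ i) (Finset.mem_univ j) hij
    nlinarith [mul_le_mul_of_nonneg_left (hbig i) hα, mul_le_mul_of_nonneg_left (hbig j) hα,
      mul_le_mul_of_nonneg_left hs2 hα]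
  obtain ⟨i, hi⟩ : ∃ i, α * t i ≤ e i := by
    by_contra! h
    have : α * M ≤ ∑ i, e i := by
      rw [← hsum, Finset.mul_sum]
      exact Finset.sum_le_sum fun i _ => (hdich i).resolve_left (h i).not_ge
    linarith
  refine ⟨i, ?_⟩
  have hrest : α * (M - s i) ≤ ∑ j ∈ Finset.univ.erase i, e j := by
    rw [← hsum, ← Finset.add_sum_erase _ _ (Finset.mem_univ i), add_sub_cancel_left,
      Finset.mul_sum]
    exact Finset.sum_le_sum fun j hj => hothers i j (Finset.ne_of_mem_erase hj).symm hi
  rw [← Finset.add_sum_erase _ e (Finset.mem_univ i)]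
  linarith

lemma exists_mul_vol_symmDiff_le {ι : Type*} [Fintype ι] {C : ι → Set V}
    (hdisj : Pairwise (Disjoint on C)) (hcover : ⋃ i, C i = Set.univ) {α β : ℝ} (hα : 0 ≤ α)
    (hin : ∀ i, α ≤ conductance (G.induce (C i))) (hout : ∀ i, cond G (C i) ≤ β) {S : Set V}
    (hbig : ∀ i, 2 * vol G S ≤ 3 * vol G (C i))
    (hsmall : 3 * (eB G S Sᶜ + α * (β * vol G Set.univ)) < α * vol G S) :
    ∃ i, α * vol G (symmDiff (C i) S) ≤ eB G S Sᶜ + α * (β * vol G Set.univ) := by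
  have herr : ∑ i, (eB G (C i ∩ S) (C i \ S) + α * eB G (C i) (C i)ᶜ) ≤
      eB G S Sᶜ + α * (β * vol G Set.univ) := by
    rw [Finset.sum_add_distrib, ← Finset.mul_sum]
    gcongr
    exacts [sum_eB_inter_sdiff_le G hdisj hcover S, sum_eB_compl_le_of_cond_le G hdisj hcover hout]
  obtain ⟨i, hi⟩ := exists_mul_add_sub_le_sum (M := vol G S) (fun i => vol G (C i ∩ S))
    (fun i => vol G (C i \ S)) (fun i => eB G (C i ∩ S) (C i \ S) + α * eB G (C i) (C i)ᶜ)
    (fun i => vol_nonneg G _)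
    (fun i => add_nonneg (eB_nonneg G _ _) (mul_nonneg hα (eB_nonneg G _ _))) hα
    (sum_vol_inter G hdisj hcover S) (fun i => vol_inter_add_vol_sdiff G (C i) S ▸ hbig i)
    (by linarith) (fun i => (mul_vol_inter_le_or_mul_vol_sdiff_le G hα (hin i) S).symm)
  exact ⟨i, by rw [vol_symmDiff]; exact hi.trans herr⟩

end Lemmas

theorem cluster_close_to_small_conductance_set_general
    {V : Type*} [Fintype V] (G : SimpleGraph V)
    (d : ℕ) (hdeg : ∀ v, 1 ≤ deg G v ∧ deg G v ≤ d)
    (q r : ℕ) (hq : 2 ≤ q) (hr2 : 2 ≤ r)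
    (ε α β : ℝ) (hε : 0 < ε) (hα : 0 < α) (hβ : 0 < β)
    (hαε : 7 * ε < α) (hβq : β ≤ 1 / (q : ℝ) ^ 10)
    (S : Set V) (hSvol : vol G S = vol G Set.univ / q)
    (hScut : eB G S Sᶜ ≤ (ε / 2) * vol G S)
    (C : Fin r → Set V)
    (hdisj : ∀ i j, i ≠ j → Disjoint (C i) (C j))
    (hcover : (⋃ i, C i) = Set.univ)
    (hin : ∀ i, α ≤ conductance (SimpleGraph.induce (C i) G))
    (hout : ∀ i, cond G (C i) ≤ β)
    (hvol : ∀ i, vol G Set.univ / (q + 1) ≤ vol G (C i)) :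
    ∃ i, vol G (symmDiff (C i) S) ≤ (4 * ε / α + (q : ℝ) ^ 2 * β) * d * vol G S := by
  rcases isEmpty_or_nonempty V with hV | ⟨⟨v₀⟩⟩
  · exact ⟨⟨0, by omega⟩, by simp [vol, Finset.univ_eq_empty]⟩
  have hq2 : (2 : ℝ) ≤ q := by exact_mod_cast hq
  have hd : (1 : ℝ) ≤ d := (hdeg v₀).1.trans (hdeg v₀).2
  have hμ : vol G Set.univ = q * vol G S := by rw [hSvol]; field_simp
  have hμS : 0 < vol G S := by
    rw [hSvol]
    have hv₀ := (hdeg v₀).1.trans (deg_le_vol G (Set.mem_univ v₀))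
    exact div_pos (by linarith) (by linarith)
  have hqβ : q * β ≤ 1 / 512 := by
    calc q * β ≤ q * (1 / (q : ℝ) ^ 10) := by gcongr
      _ = 1 / (q : ℝ) ^ 9 := by field_simp
      _ ≤ 1 / 2 ^ 9 := by gcongr
      _ = 1 / 512 := by norm_num
  have hbig : ∀ i, 2 * vol G S ≤ 3 * vol G (C i) := fun i => by
    have := hvol i
    rw [hμ, div_le_iff₀ (by linarith)] at this
    nlinarith
  obtain ⟨i, hi⟩ := exists_mul_vol_symmDiff_le G hdisj hcover hα.le hin hout hbig (by
    rw [hμ]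
    nlinarith [mul_le_mul_of_nonneg_left hqβ (mul_pos hα hμS).le])
  refine ⟨i, le_of_mul_le_mul_left ?_ hα⟩
  calc α * vol G (symmDiff (C i) S)
      ≤ ε / 2 * vol G S + α * (q * β * vol G S) := by
        rw [hμ] at hi
        linarith
    _ ≤ 4 * ε * d * vol G S + α * (q ^ 2 * d * β * vol G S) := by
      gcongr
      · nlinarith
      · nlinarith
    _ = α * ((4 * ε / α + (q : ℝ) ^ 2 * β) * d * vol G S) := by field_simp

/-- Suppose `G'` is a graph with all degrees in `[1,d]`,
`2 ≤ r ≤ q`, `α > 7ε > 0`, `0 < β ≤ 1/q^10`, `S` has volume `μ_{G'}/q` and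
`e(S, V'∖S) ≤ (ε/2) μ(S)`, and `C_1,…,C_r` is a partition of the vertices such
that each induced subgraph `G'[C_i]` has minimum degree at least `1` and
conductance at least `α`, each `C_i` has outer conductance at most `β` and
volume at least `μ_{G'}/(q+1)`.  Then some `C_i` satisfies
`μ(C_i △ S) ≤ (4ε/α + q²β)·d·μ(S)`. -/
theorem cluster_close_to_small_conductance_set
    {V : Type*} [Fintype V] (G : SimpleGraph V)
    (d : ℕ) (hdeg : ∀ v, 1 ≤ deg G v ∧ deg G v ≤ d)
    (q r : ℕ) (hq : 2 ≤ q) (hr2 : 2 ≤ r) (hrq : r ≤ q)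
    (ε α β : ℝ) (hε : 0 < ε) (hα : 0 < α) (hβ : 0 < β)
    (hαε : 7 * ε < α) (hβq : β ≤ 1 / (q : ℝ) ^ 10)
    (S : Set V) (hSvol : vol G S = vol G Set.univ / q)
    (hScut : eB G S Sᶜ ≤ (ε / 2) * vol G S)
    (C : Fin r → Set V)
    (hdisj : ∀ i j, i ≠ j → Disjoint (C i) (C j))
    (hcover : (⋃ i, C i) = Set.univ)
    (hindeg : ∀ i, ∀ v : (C i), 1 ≤ deg (SimpleGraph.induce (C i) G) v)
    (hin : ∀ i, α ≤ conductance (SimpleGraph.induce (C i) G))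
    (hout : ∀ i, cond G (C i) ≤ β)
    (hvol : ∀ i, vol G Set.univ / (q + 1) ≤ vol G (C i)) :
    ∃ i, vol G (symmDiff (C i) S) ≤ (4 * ε / α + (q : ℝ) ^ 2 * β) * d * vol G S :=
  cluster_close_to_small_conductance_set_general G d hdeg q r hq hr2 ε α β hε hα hβ hαε hβq S hSvol
    hScut C hdisj hcover hin hout hvol

end Sublinear
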